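/- arXiv:1301.2358 — 2 statements merged into one kernel-verified Lean document; each statement's English description precedes it below -/
import Mathlib

section
/- Let 0 < γ < 1 and let f ∈ L²(ℝᵈ) with Fourier transform f̂ ∈ C¹(ℝᵈ \ {0}) satisfying |k|^{1-γ} ∂f̂ ∈ L¹(ℝᵈ; ℂᵈ) and |k|^{-γ} f̂ ∈ L¹(ℝᵈ). Then there is a constant C(γ) depending only on γ (and d) such that for all x ≠ 0, |f(x)| ≤ C(γ) |x|^{-γ} ( ‖|k|^{-γ} f̂‖_{L¹} + ‖|k|^{1-γ} ∂f̂‖_{L¹} ). -/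
/-!
Translating the frequency variable by `h` with `⟪h, x⟫ = π` multiplies the oscillatory integral by
`e^{-iπ} = -1` (the paper's shift `x / ‖x‖²` gives the factor `e^{-i} - 1` instead), hence
`2 |f(x)| ≤ ∫ |f̂(k + h) - f̂(k)| dk` with `‖h‖ = π / ‖x‖`. For `‖k‖ ≤ 2‖h‖` both `k` and `k + h`
lie in the ball of radius `3‖h‖`, where `|f̂(k)| ≤ (3‖h‖)^γ ‖k‖^{-γ} |f̂(k)|`. For `‖k‖ > 2‖h‖` the
segment `[k, k + h]` stays at distance more than `‖h‖` from the origin, so the fundamental theorem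
of calculus gives `|f̂(k + h) - f̂(k)| ≤ ‖h‖^γ ∫₀¹ ‖k + th‖^{1-γ} ‖∂f̂(k + th)‖ dt`, and integrating
in `k` (Tonelli and translation invariance) leaves `‖h‖^γ ‖ ‖k‖^{1-γ} ∂f̂ ‖₁`.
-/

open MeasureTheory
open scoped RealInnerProductSpace

open Set Metric Complex
open scoped ENNReal Real

theorem le_rpow_mul_rpow_of_le {a b γ : ℝ} (ha : 0 ≤ a) (hab : a ≤ b) (hγ : γ ≤ 1) :
    a ≤ a ^ γ * b ^ (1 - γ) :=
  calc a = a ^ γ * a ^ (1 - γ) := by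
        rw [← Real.rpow_add' ha (by simp), add_sub_cancel, Real.rpow_one]
    _ ≤ a ^ γ * b ^ (1 - γ) := by gcongr

section Segment

variable {E F : Type*} [NormedAddCommGroup E] [NormedSpace ℝ E]
  [NormedAddCommGroup F] [NormedSpace ℝ F]

theorem enorm_sub_le_lintegral_fderiv_segment {f : E → F} {s : Set E} (hf : ContDiffOn ℝ 1 f s)
    (hs : IsOpen s) {k h : E} (hseg : ∀ t ∈ Icc (0 : ℝ) 1, k + t • h ∈ s) :
    ‖f (k + h) - f k‖ₑ ≤ ∫⁻ t in Icc (0 : ℝ) 1, ‖fderiv ℝ f (k + t • h)‖ₑ * ‖h‖ₑ := by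
  have hcomp : ContDiffOn ℝ 1 (fun t : ℝ => f (k + t • h)) (Icc 0 1) :=
    hf.comp (contDiff_const.add (contDiff_id.smul contDiff_const)).contDiffOn hseg
  have := enorm_sub_le_lintegral_deriv_of_contDiffOn_Icc hcomp zero_le_one
  simp only [one_smul, zero_smul, add_zero] at this
  refine this.trans (setLIntegral_mono' measurableSet_Icc fun t ht => ?_)
  have hpath : HasDerivAt (fun t : ℝ => k + t • h) h t := by
    simpa using ((hasDerivAt_id t).smul_const h).const_add k
  have hdiff : DifferentiableAt ℝ f (k + t • h) :=
    (hf.contDiffAt (hs.mem_nhds (hseg t ht))).differentiableAt one_ne_zero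
  have hderiv : HasDerivAt (fun t : ℝ => f (k + t • h)) (fderiv ℝ f (k + t • h) h) t :=
    hdiff.hasFDerivAt.comp_hasDerivAt t hpath
  rw [hderiv.deriv]
  exact ContinuousLinearMap.le_opENorm _ _

theorem norm_lt_norm_add_smul_of_two_mul_lt {k h : E} (hk : 2 * ‖h‖ < ‖k‖) (t : ℝ)
    (ht : t ∈ Icc (0 : ℝ) 1) : ‖h‖ < ‖k + t • h‖ := by
  have : ‖t • h‖ ≤ ‖h‖ := by
    rw [norm_smul, Real.norm_of_nonneg ht.1]
    exact mul_le_of_le_one_left (norm_nonneg h) ht.2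
  have := norm_sub_le (k + t • h) (t • h)
  rw [add_sub_cancel_right] at this
  linarith

theorem enorm_sub_le_rpow_mul_lintegral_segment {γ : ℝ} (hγ : γ ≤ 1) {f : E → F}
    (hf : ContDiffOn ℝ 1 f {0}ᶜ) {k h : E} (hk : 2 * ‖h‖ < ‖k‖) :
    ‖f (k + h) - f k‖ₑ ≤ ENNReal.ofReal (‖h‖ ^ γ) *
      ∫⁻ t in Icc (0 : ℝ) 1, ENNReal.ofReal (‖k + t • h‖ ^ (1 - γ) * ‖fderiv ℝ f (k + t • h)‖) := by
  have hseg := norm_lt_norm_add_smul_of_two_mul_lt hk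
  have hne : ∀ t ∈ Icc (0 : ℝ) 1, k + t • h ∈ ({0}ᶜ : Set E) := fun t ht =>
    norm_pos_iff.mp ((norm_nonneg h).trans_lt (hseg t ht))
  refine (enorm_sub_le_lintegral_fderiv_segment hf isOpen_compl_singleton hne).trans ?_
  rw [← lintegral_const_mul' _ _ ENNReal.ofReal_ne_top]
  refine setLIntegral_mono' measurableSet_Icc fun t ht => ?_
  rw [← ofReal_norm, ← ofReal_norm, ← ENNReal.ofReal_mul (norm_nonneg _),
    ← ENNReal.ofReal_mul (by positivity)]
  refine ENNReal.ofReal_le_ofReal ?_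
  calc ‖fderiv ℝ f (k + t • h)‖ * ‖h‖
      ≤ ‖fderiv ℝ f (k + t • h)‖ * (‖h‖ ^ γ * ‖k + t • h‖ ^ (1 - γ)) := by
        gcongr; exact le_rpow_mul_rpow_of_le (norm_nonneg h) (hseg t ht).le hγ
    _ = ‖h‖ ^ γ * (‖k + t • h‖ ^ (1 - γ) * ‖fderiv ℝ f (k + t • h)‖) := by ring

end Segment

section Integral

variable {E F : Type*} [NormedAddCommGroup E] [MeasurableSpace E] [BorelSpace E]
  [NormedAddCommGroup F] {μ : Measure E}

theorem setLIntegral_closedBall_enorm_le [NullSingletonClass μ] {γ : ℝ} (hγ : 0 ≤ γ)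
    (f : E → F) (r : ℝ) :
    ∫⁻ k in closedBall 0 r, ‖f k‖ₑ ∂μ ≤
      ENNReal.ofReal (r ^ γ) * ∫⁻ k, ENNReal.ofReal (‖k‖ ^ (-γ) * ‖f k‖) ∂μ := by
  rw [← lintegral_const_mul' _ _ ENNReal.ofReal_ne_top]
  refine (setLIntegral_mono_ae' measurableSet_closedBall ?_).trans (setLIntegral_le_lintegral _ _)
  filter_upwards [Measure.ae_ne μ 0] with k hk hkr
  have hk0 : 0 < ‖k‖ := norm_pos_iff.mpr hk
  rw [mem_closedBall, dist_zero_right] at hkr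
  rw [← ofReal_norm, ← ENNReal.ofReal_mul (Real.rpow_nonneg (hk0.le.trans hkr) γ)]
  refine ENNReal.ofReal_le_ofReal ?_
  calc ‖f k‖ = ‖k‖ ^ γ * (‖k‖ ^ (-γ) * ‖f k‖) := by
        rw [← mul_assoc, ← Real.rpow_add hk0, add_neg_cancel, Real.rpow_zero, one_mul]
    _ ≤ r ^ γ * (‖k‖ ^ (-γ) * ‖f k‖) := by gcongr

theorem setLIntegral_closedBall_enorm_sub_le [μ.IsAddRightInvariant] {f : E → F}
    (hf : AEStronglyMeasurable f μ) (h : E) :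
    ∫⁻ k in closedBall 0 (2 * ‖h‖), ‖f (k + h) - f k‖ₑ ∂μ ≤
      2 * ∫⁻ k in closedBall 0 (3 * ‖h‖), ‖f k‖ₑ ∂μ := by
  have hshift : ∫⁻ k in closedBall 0 (2 * ‖h‖), ‖f (k + h)‖ₑ ∂μ ≤
      ∫⁻ k in closedBall 0 (3 * ‖h‖), ‖f k‖ₑ ∂μ := by
    have hsubset : closedBall 0 (2 * ‖h‖) ⊆ (· + h) ⁻¹' closedBall 0 (3 * ‖h‖) := fun k hk => by
      simp only [mem_preimage, mem_closedBall, dist_zero_right] at hk ⊢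
      linarith [norm_add_le k h]
    exact (lintegral_mono_set hsubset).trans_eq
      ((measurePreserving_add_right μ h).setLIntegral_comp_preimage_emb
        (MeasurableEquiv.addRight h).measurableEmbedding (fun y => ‖f y‖ₑ) _)
  have hsub : ∫⁻ k in closedBall 0 (2 * ‖h‖), ‖f k‖ₑ ∂μ ≤
      ∫⁻ k in closedBall 0 (3 * ‖h‖), ‖f k‖ₑ ∂μ :=
    lintegral_mono_set (closedBall_subset_closedBall (by linarith [norm_nonneg h]))
  calc ∫⁻ k in closedBall 0 (2 * ‖h‖), ‖f (k + h) - f k‖ₑ ∂μ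
      ≤ ∫⁻ k in closedBall 0 (2 * ‖h‖), (‖f (k + h)‖ₑ + ‖f k‖ₑ) ∂μ :=
        lintegral_mono fun k => enorm_sub_le
    _ = (∫⁻ k in closedBall 0 (2 * ‖h‖), ‖f (k + h)‖ₑ ∂μ) +
          ∫⁻ k in closedBall 0 (2 * ‖h‖), ‖f k‖ₑ ∂μ :=
        lintegral_add_right' _ hf.enorm.restrict
    _ ≤ _ := add_le_add hshift hsub
    _ = 2 * ∫⁻ k in closedBall 0 (3 * ‖h‖), ‖f k‖ₑ ∂μ := (two_mul _).symm

variable [NormedSpace ℝ E] [SecondCountableTopology E] [NormedSpace ℝ F]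

theorem lintegral_lintegral_add_smul [SFinite μ] [μ.IsAddRightInvariant] {g : E → ℝ≥0∞}
    (hg : Measurable g) (h : E) :
    ∫⁻ k, (∫⁻ t in Icc (0 : ℝ) 1, g (k + t • h)) ∂μ = ∫⁻ k, g k ∂μ := by
  have hmeas : Measurable (Function.uncurry fun (k : E) (t : ℝ) => g (k + t • h)) :=
    hg.comp (measurable_fst.add (measurable_snd.smul_const h))
  rw [lintegral_lintegral_swap hmeas.aemeasurable]
  simp only [lintegral_add_right_eq_self (μ := μ) g, setLIntegral_const, Real.volume_Icc]
  norm_num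

theorem setLIntegral_compl_closedBall_enorm_sub_le [CompleteSpace F] [SFinite μ]
    [μ.IsAddRightInvariant] {γ : ℝ} (hγ : γ ≤ 1) {f : E → F} (hf : ContDiffOn ℝ 1 f {0}ᶜ)
    (h : E) :
    ∫⁻ k in (closedBall 0 (2 * ‖h‖))ᶜ, ‖f (k + h) - f k‖ₑ ∂μ ≤
      ENNReal.ofReal (‖h‖ ^ γ) * ∫⁻ k, ENNReal.ofReal (‖k‖ ^ (1 - γ) * ‖fderiv ℝ f k‖) ∂μ := by
  have hG : Measurable fun k : E => ENNReal.ofReal (‖k‖ ^ (1 - γ) * ‖fderiv ℝ f k‖) := by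
    fun_prop
  calc ∫⁻ k in (closedBall 0 (2 * ‖h‖))ᶜ, ‖f (k + h) - f k‖ₑ ∂μ
      ≤ ∫⁻ k in (closedBall 0 (2 * ‖h‖))ᶜ, ENNReal.ofReal (‖h‖ ^ γ) * (∫⁻ t in Icc (0 : ℝ) 1,
          ENNReal.ofReal (‖k + t • h‖ ^ (1 - γ) * ‖fderiv ℝ f (k + t • h)‖)) ∂μ := by
        refine setLIntegral_mono' measurableSet_closedBall.compl fun k hk => ?_
        simp only [mem_compl_iff, mem_closedBall, dist_zero_right, not_le] at hk
        exact enorm_sub_le_rpow_mul_lintegral_segment hγ hf hk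
    _ ≤ ENNReal.ofReal (‖h‖ ^ γ) * ∫⁻ k, (∫⁻ t in Icc (0 : ℝ) 1,
          ENNReal.ofReal (‖k + t • h‖ ^ (1 - γ) * ‖fderiv ℝ f (k + t • h)‖)) ∂μ := by
        rw [← lintegral_const_mul' _ _ ENNReal.ofReal_ne_top]
        exact setLIntegral_le_lintegral _ _
    _ = _ := by rw [lintegral_lintegral_add_smul hG]

theorem lintegral_enorm_comp_add_right_sub_le [CompleteSpace F] [SFinite μ]
    [μ.IsAddRightInvariant] [NullSingletonClass μ] {γ : ℝ} (hγ0 : 0 ≤ γ) (hγ1 : γ ≤ 1)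
    {f : E → F} (hf : ContDiffOn ℝ 1 f {0}ᶜ) (h : E) :
    ∫⁻ k, ‖f (k + h) - f k‖ₑ ∂μ ≤ ENNReal.ofReal (‖h‖ ^ γ) *
      (ENNReal.ofReal (2 * 3 ^ γ) * ∫⁻ k, ENNReal.ofReal (‖k‖ ^ (-γ) * ‖f k‖) ∂μ +
        ∫⁻ k, ENNReal.ofReal (‖k‖ ^ (1 - γ) * ‖fderiv ℝ f k‖) ∂μ) := by
  have hmeas : AEStronglyMeasurable f μ := by
    simpa using hf.continuousOn.aestronglyMeasurable (μ := μ) isOpen_compl_singleton.measurableSet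
  have hnear : ∫⁻ k in closedBall 0 (2 * ‖h‖), ‖f (k + h) - f k‖ₑ ∂μ ≤
      2 * (ENNReal.ofReal ((3 * ‖h‖) ^ γ) * ∫⁻ k, ENNReal.ofReal (‖k‖ ^ (-γ) * ‖f k‖) ∂μ) :=
    (setLIntegral_closedBall_enorm_sub_le hmeas h).trans
      (by gcongr; exact setLIntegral_closedBall_enorm_le hγ0 f _)
  rw [← lintegral_add_compl _ (measurableSet_closedBall (x := (0 : E)) (ε := 2 * ‖h‖))]
  refine (add_le_add hnear (setLIntegral_compl_closedBall_enorm_sub_le hγ1 hf h)).trans_eq ?_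
  rw [Real.mul_rpow (by norm_num) (norm_nonneg h), ENNReal.ofReal_mul (by positivity),
    ENNReal.ofReal_mul zero_le_two, ENNReal.ofReal_ofNat]
  ring

end Integral

section Fourier

variable {E : Type*} [NormedAddCommGroup E] [InnerProductSpace ℝ E]

theorem mul_cexp_inner_eq_cexp_neg_mul (c : ℂ) (k h x : E) :
    c * cexp (I * ⟪k, x⟫) = cexp (-(I * ⟪h, x⟫)) * (c * cexp (I * ⟪k + h, x⟫)) := by
  have hcancel : cexp (-(I * ⟪h, x⟫)) * cexp (I * ⟪h, x⟫) = 1 := by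
    rw [← Complex.exp_add, neg_add_cancel, Complex.exp_zero]
  rw [inner_add_left, ofReal_add, mul_add, Complex.exp_add]
  linear_combination -(c * cexp (I * ⟪k, x⟫)) * hcancel

variable [MeasurableSpace E] [BorelSpace E] {μ : Measure E} [μ.IsAddRightInvariant]

theorem integral_comp_add_right_mul_cexp (g : E → ℂ) (h x : E) :
    ∫ k, g (k + h) * cexp (I * ⟪k, x⟫) ∂μ =
      cexp (-(I * ⟪h, x⟫)) * ∫ k, g k * cexp (I * ⟪k, x⟫) ∂μ := by
  rw [← integral_add_right_eq_self (fun k => g k * cexp (I * ⟪k, x⟫)) h, ← integral_const_mul]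
  exact integral_congr_ae (.of_forall fun k => mul_cexp_inner_eq_cexp_neg_mul _ k h x)

theorem enorm_integral_mul_cexp_le (g : E → ℂ) (h x : E) :
    ‖cexp (-(I * ⟪h, x⟫)) - 1‖ₑ * ‖∫ k, g k * cexp (I * ⟪k, x⟫) ∂μ‖ₑ ≤
      ∫⁻ k, ‖g (k + h) - g k‖ₑ ∂μ := by
  by_cases hg : Integrable (fun k => g k * cexp (I * ⟪k, x⟫)) μ
  swap
  · simp [integral_undef hg]
  have hgh : Integrable (fun k => g (k + h) * cexp (I * ⟪k, x⟫)) μ := by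
    refine ((hg.comp_add_right h).const_mul (cexp (-(I * ⟪h, x⟫)))).congr (.of_forall fun k => ?_)
    exact (mul_cexp_inner_eq_cexp_neg_mul _ k h x).symm
  rw [← enorm_mul, sub_mul, one_mul, ← integral_comp_add_right_mul_cexp, ← integral_sub hgh hg]
  refine (enorm_integral_le_lintegral_enorm _).trans_eq (lintegral_congr fun k => ?_)
  rw [← sub_mul, enorm_mul, enorm_exp_I_mul_ofReal, mul_one]

theorem two_mul_norm_integral_mul_cexp_le [SecondCountableTopology E] [SFinite μ]
    [NullSingletonClass μ] {γ : ℝ} (hγ0 : 0 ≤ γ) (hγ1 : γ ≤ 1) {f : E → ℂ}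
    (hf : ContDiffOn ℝ 1 f {0}ᶜ)
    (hW : Integrable (fun k => ‖k‖ ^ (-γ) * ‖f k‖) μ)
    (hD : Integrable (fun k => ‖k‖ ^ (1 - γ) * ‖fderiv ℝ f k‖) μ) {h x : E} (hhx : ⟪h, x⟫ = π) :
    2 * ‖∫ k, f k * cexp (I * ⟪k, x⟫) ∂μ‖ ≤ ‖h‖ ^ γ *
      (2 * 3 ^ γ * ∫ k, ‖k‖ ^ (-γ) * ‖f k‖ ∂μ + ∫ k, ‖k‖ ^ (1 - γ) * ‖fderiv ℝ f k‖ ∂μ) := by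
  have hW0 : 0 ≤ ∫ k, ‖k‖ ^ (-γ) * ‖f k‖ ∂μ := integral_nonneg fun k => by positivity
  have hD0 : 0 ≤ ∫ k, ‖k‖ ^ (1 - γ) * ‖fderiv ℝ f k‖ ∂μ := integral_nonneg fun k => by positivity
  have hexp : cexp (-(I * ⟪h, x⟫)) - 1 = -2 := by
    rw [hhx, mul_comm, Complex.exp_neg, exp_pi_mul_I]; norm_num
  have key := (enorm_integral_mul_cexp_le (μ := μ) f h x).trans
    (lintegral_enorm_comp_add_right_sub_le hγ0 hγ1 hf h)
  rw [hexp, ← ofReal_integral_eq_lintegral_ofReal hW (.of_forall fun k => by positivity),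
    ← ofReal_integral_eq_lintegral_ofReal hD (.of_forall fun k => by positivity)] at key
  rw [← ENNReal.ofReal_le_ofReal_iff
    (mul_nonneg (by positivity) (add_nonneg (mul_nonneg (by positivity) hW0) hD0))]
  calc ENNReal.ofReal (2 * ‖∫ k, f k * cexp (I * ⟪k, x⟫) ∂μ‖)
      = ‖(-2 : ℂ)‖ₑ * ‖∫ k, f k * cexp (I * ⟪k, x⟫) ∂μ‖ₑ := by
        rw [← ofReal_norm, ← ofReal_norm, ← ENNReal.ofReal_mul (norm_nonneg _)]; norm_num
    _ ≤ _ := key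
    _ = _ := by
        rw [← ENNReal.ofReal_mul (by positivity : (0 : ℝ) ≤ 2 * 3 ^ γ),
          ← ENNReal.ofReal_add (mul_nonneg (by positivity) hW0) hD0,
          ← ENNReal.ofReal_mul (by positivity : (0 : ℝ) ≤ ‖h‖ ^ γ)]

end Fourier

/-- Fractional Fourier decay (Lemma `decay`): if `0 < γ < 1`, `f̂ ∈ L²(ℝᵈ)` is `C¹` away
from `0`, with `|k|^{1-γ}∂f̂` and `|k|^{-γ}f̂` integrable, then the (inverse) Fourier
transform `f(x) = ∫ f̂(k) e^{ik·x} dk` satisfies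
`|f(x)| ≤ C(γ)|x|^{-γ}(‖|k|^{-γ}f̂‖₁ + ‖|k|^{1-γ}∂f̂‖₁)` for all `x ≠ 0`. -/
theorem fractional_fourier_decay (d : ℕ) (γ : ℝ) (hγ0 : 0 < γ) (hγ1 : γ < 1) :
    ∃ C > 0, ∀ fhat : EuclideanSpace ℝ (Fin d) → ℂ,
      MemLp fhat 2 (volume : Measure (EuclideanSpace ℝ (Fin d))) →
      ContDiffOn ℝ 1 fhat {0}ᶜ →
      Integrable (fun k : EuclideanSpace ℝ (Fin d) =>
        ‖k‖ ^ (1 - γ) * ‖fderiv ℝ fhat k‖) volume →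
      Integrable (fun k : EuclideanSpace ℝ (Fin d) => ‖k‖ ^ (-γ) * ‖fhat k‖) volume →
      ∀ x : EuclideanSpace ℝ (Fin d), x ≠ 0 →
        ‖∫ k : EuclideanSpace ℝ (Fin d),
            fhat k * Complex.exp (Complex.I * (⟪k, x⟫ : ℝ))‖ ≤
          C * ‖x‖ ^ (-γ) *
            ((∫ k : EuclideanSpace ℝ (Fin d), ‖k‖ ^ (-γ) * ‖fhat k‖) +
             (∫ k : EuclideanSpace ℝ (Fin d), ‖k‖ ^ (1 - γ) * ‖fderiv ℝ fhat k‖)) := by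
  refine ⟨π ^ γ * (2 * 3 ^ γ + 1) / 2, by positivity, fun fhat _ hC1 hD hW x hx => ?_⟩
  have : Nontrivial (EuclideanSpace ℝ (Fin d)) := ⟨⟨x, 0, hx⟩⟩
  have hx0 : 0 < ‖x‖ := norm_pos_iff.mpr hx
  set h := (π / ‖x‖ ^ 2) • x
  have hhx : ⟪h, x⟫ = π := by
    rw [real_inner_smul_left, real_inner_self_eq_norm_sq]; field_simp
  have hh : ‖h‖ ^ γ = π ^ γ * ‖x‖ ^ (-γ) := by
    rw [norm_smul, Real.norm_of_nonneg (by positivity), pow_two, div_mul_eq_div_div,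
      div_mul_cancel₀ _ hx0.ne', Real.div_rpow Real.pi_pos.le hx0.le, Real.rpow_neg hx0.le,
      div_eq_mul_inv]
  have hbound := two_mul_norm_integral_mul_cexp_le hγ0.le hγ1.le hC1 hW hD hhx
  rw [hh] at hbound
  have hW0 : 0 ≤ ∫ k, ‖k‖ ^ (-γ) * ‖fhat k‖ := integral_nonneg fun k => by positivity
  have hD0 : 0 ≤ ∫ k, ‖k‖ ^ (1 - γ) * ‖fderiv ℝ fhat k‖ := integral_nonneg fun k => by positivity
  have hpx : 0 ≤ π ^ γ * ‖x‖ ^ (-γ) := by positivity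
  have h3 : 0 ≤ (3 : ℝ) ^ γ := by positivity
  nlinarith [mul_nonneg hpx hD0, mul_nonneg (mul_nonneg hpx h3) hD0]
end

section
/- Let ζ : ℝ → ℂ be a Schwartz-type function satisfying |∂ⁿζ(x)| ≤ C(n,N) ⟨x⟩^{-N} for all n, N. Then for every N > 0 there is a constant C such that for all t > 0 and ω₊ ≥ 0, ∫₀^{π/2} (sin θ)^{d-2} ⟨(1/4) t² θ² ω₊²⟩^{-N/2} dθ ≤ C (1 + t ω₊)^{1-d}, where d ≥ 3 and N is taken large enough (N ≥ d suffices). -/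
open Real intervalIntegral

/-- Japanese bracket `⟨x⟩ = √(x²+1)`. -/
noncomputable def jbracket (x : ℝ) : ℝ := Real.sqrt (x ^ 2 + 1)

/-! Since `⟨u²/4⟩ ≥ ((1 + u)/4)²` and `sin θ ≤ θ`, the integrand is at most
`4^N θ^(d-2) (1 + aθ)^(-N)` with `a = tω`. On `[0, π/2]` one has
`θ(1 + a) ≤ (π/2)(1 + aθ)`, so `θ^(d-2) ≤ (π/2 / (1 + a))^(d-2) (1 + aθ)^(d-2)`,
and `N ≥ d` leaves the factor `(1 + aθ)^(-2)`, whose integral over `[0, π/2]` is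
`(π/2) / (1 + aπ/2) ≤ (π/2) / (1 + a)`. -/

lemma one_le_jbracket (x : ℝ) : 1 ≤ jbracket x :=
  Real.one_le_sqrt.mpr (by nlinarith [sq_nonneg x])

lemma jbracket_pos (x : ℝ) : 0 < jbracket x :=
  zero_lt_one.trans_le (one_le_jbracket x)

lemma abs_le_jbracket (x : ℝ) : |x| ≤ jbracket x :=
  Real.abs_le_sqrt (by linarith)

lemma continuous_jbracket : Continuous jbracket := by
  unfold jbracket; fun_prop

lemma sq_one_add_div_four_le_jbracket (u : ℝ) : ((1 + u) / 4) ^ 2 ≤ jbracket (u ^ 2 / 4) := by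
  have h₁ := one_le_jbracket (u ^ 2 / 4)
  have h₂ := abs_le_jbracket (u ^ 2 / 4)
  rw [abs_of_nonneg (by positivity)] at h₂
  nlinarith [sq_nonneg (u - 1)]

lemma jbracket_rpow_neg_le {N u : ℝ} (hN : 0 ≤ N) (hu : 0 ≤ u) :
    jbracket (u ^ 2 / 4) ^ (-(N / 2)) ≤ 4 ^ N * (1 + u) ^ (-N) :=
  calc jbracket (u ^ 2 / 4) ^ (-(N / 2)) ≤ (((1 + u) / 4) ^ 2) ^ (-(N / 2)) :=
        rpow_le_rpow_of_nonpos (by positivity) (sq_one_add_div_four_le_jbracket u) (by linarith)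
    _ = 4 ^ N * (1 + u) ^ (-N) := by
        rw [← rpow_two, ← rpow_mul (by positivity), show 2 * -(N / 2) = -N by ring,
          div_rpow (by positivity) (by norm_num), rpow_neg (by norm_num : (0 : ℝ) ≤ 4),
          div_inv_eq_mul, mul_comm]

lemma pow_mul_one_add_mul_rpow_neg_le {m : ℕ} {N a c θ : ℝ} (hN : m + 2 ≤ N) (ha : 0 ≤ a)
    (hc : 1 ≤ c) (hθ₀ : 0 ≤ θ) (hθ : θ ≤ c) :
    θ ^ m * (1 + a * θ) ^ (-N) ≤ (c / (1 + a)) ^ m * ((1 + a * θ) ^ 2)⁻¹ := by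
  have hθ' : θ ≤ c / (1 + a) * (1 + a * θ) := by
    rw [div_mul_eq_mul_div, le_div_iff₀ (by positivity)]
    nlinarith [mul_nonneg ha hθ₀]
  have hone : 1 ≤ 1 + a * θ := by nlinarith [mul_nonneg ha hθ₀]
  have hpow : (1 + a * θ) ^ m * (1 + a * θ) ^ (-N) ≤ ((1 + a * θ) ^ 2)⁻¹ := by
    rw [← rpow_natCast, ← rpow_add (by positivity), ← rpow_two, ← rpow_neg (by positivity)]
    exact rpow_le_rpow_of_exponent_le hone (by linarith)
  calc θ ^ m * (1 + a * θ) ^ (-N)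
      ≤ (c / (1 + a) * (1 + a * θ)) ^ m * (1 + a * θ) ^ (-N) := by gcongr
    _ = (c / (1 + a)) ^ m * ((1 + a * θ) ^ m * (1 + a * θ) ^ (-N)) := by rw [mul_pow, mul_assoc]
    _ ≤ (c / (1 + a)) ^ m * ((1 + a * θ) ^ 2)⁻¹ := by gcongr

lemma intervalIntegrable_inv_sq_one_add_mul {a c : ℝ} (ha : 0 ≤ a) (hc : 0 ≤ c) :
    IntervalIntegrable (fun θ => ((1 + a * θ) ^ 2)⁻¹) MeasureTheory.volume 0 c :=
  ContinuousOn.intervalIntegrable <| ContinuousOn.inv₀ (by fun_prop) fun θ hθ => by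
    rw [Set.uIcc_of_le hc] at hθ
    have : 0 ≤ a * θ := mul_nonneg ha hθ.1
    positivity

lemma integral_inv_sq_one_add_mul {a c : ℝ} (ha : 0 ≤ a) (hc : 0 ≤ c) :
    ∫ θ in (0 : ℝ)..c, ((1 + a * θ) ^ 2)⁻¹ = c / (1 + a * c) := by
  have hderiv : ∀ θ ∈ Set.uIcc 0 c,
      HasDerivAt (fun x => x / (1 + a * x)) ((1 + a * θ) ^ 2)⁻¹ θ := by
    intro θ hθ
    rw [Set.uIcc_of_le hc] at hθ
    have hpos : 0 < 1 + a * θ := by nlinarith [mul_nonneg ha hθ.1]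
    refine ((hasDerivAt_id' θ).fun_div (((hasDerivAt_id' θ).const_mul a).const_add 1)
      hpos.ne').congr_deriv ?_
    rw [inv_eq_one_div]
    ring
  rw [integral_eq_sub_of_hasDerivAt hderiv (intervalIntegrable_inv_sq_one_add_mul ha hc)]
  simp

lemma sin_pow_mul_jbracket_rpow_neg_le {m : ℕ} {N a θ : ℝ} (hN : m + 2 ≤ N) (ha : 0 ≤ a)
    (hθ₀ : 0 ≤ θ) (hθ : θ ≤ π / 2) :
    sin θ ^ m * jbracket ((a * θ) ^ 2 / 4) ^ (-(N / 2))
      ≤ 4 ^ N * (π / 2 / (1 + a)) ^ m * ((1 + a * θ) ^ 2)⁻¹ :=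
  calc sin θ ^ m * jbracket ((a * θ) ^ 2 / 4) ^ (-(N / 2))
      ≤ θ ^ m * (4 ^ N * (1 + a * θ) ^ (-N)) := by
        gcongr
        · exact (rpow_pos_of_pos (jbracket_pos _) _).le
        · exact sin_nonneg_of_nonneg_of_le_pi hθ₀ (by linarith [pi_pos])
        · exact sin_le hθ₀
        · exact jbracket_rpow_neg_le (by linarith) (by positivity)
    _ = 4 ^ N * (θ ^ m * (1 + a * θ) ^ (-N)) := by ring
    _ ≤ 4 ^ N * ((π / 2 / (1 + a)) ^ m * ((1 + a * θ) ^ 2)⁻¹) :=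
        mul_le_mul_of_nonneg_left
          (pow_mul_one_add_mul_rpow_neg_le hN ha (by linarith [pi_gt_three]) hθ₀ hθ)
          (by positivity)
    _ = 4 ^ N * (π / 2 / (1 + a)) ^ m * ((1 + a * θ) ^ 2)⁻¹ := by ring

lemma integral_sin_pow_mul_jbracket_rpow_neg_le {m : ℕ} {N a : ℝ} (hN : m + 2 ≤ N)
    (ha : 0 ≤ a) :
    ∫ θ in (0 : ℝ)..(π / 2), sin θ ^ m * jbracket ((a * θ) ^ 2 / 4) ^ (-(N / 2))
      ≤ 4 ^ N * (π / 2) ^ (m + 1) * ((1 + a) ^ (m + 1))⁻¹ := by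
  have hcont : Continuous fun θ => sin θ ^ m * jbracket ((a * θ) ^ 2 / 4) ^ (-(N / 2)) :=
    (continuous_sin.pow m).mul <| (continuous_jbracket.comp (by fun_prop)).rpow_const
      fun _ => Or.inl (jbracket_pos _).ne'
  calc ∫ θ in (0 : ℝ)..(π / 2), sin θ ^ m * jbracket ((a * θ) ^ 2 / 4) ^ (-(N / 2))
      ≤ ∫ θ in (0 : ℝ)..(π / 2), 4 ^ N * (π / 2 / (1 + a)) ^ m * ((1 + a * θ) ^ 2)⁻¹ :=
        integral_mono_on (by positivity) (hcont.intervalIntegrable _ _)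
          ((intervalIntegrable_inv_sq_one_add_mul ha (by positivity)).const_mul _)
          fun θ hθ => sin_pow_mul_jbracket_rpow_neg_le hN ha hθ.1 hθ.2
    _ = 4 ^ N * (π / 2 / (1 + a)) ^ m * (π / 2 / (1 + a * (π / 2))) := by
        rw [integral_const_mul, integral_inv_sq_one_add_mul ha (by positivity)]
    _ ≤ 4 ^ N * (π / 2 / (1 + a)) ^ m * (π / 2 / (1 + a)) := by
        gcongr
        nlinarith [pi_gt_three]
    _ = 4 ^ N * (π / 2) ^ (m + 1) * ((1 + a) ^ (m + 1))⁻¹ := by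
        rw [div_pow, pow_succ, pow_succ]
        field_simp

/-- Angular stationary-phase estimate: for `d ≥ 3` and `N ≥ d`, there is a constant `C`
such that for all `t > 0` and `ω₊ ≥ 0`,
`∫₀^{π/2} (sin θ)^{d-2} ⟨(1/4)t²θ²ω₊²⟩^{-N/2} dθ ≤ C (1 + tω₊)^{1-d}`. -/
theorem angular_integral_bound (d : ℕ) (hd : 3 ≤ d) (N : ℝ) (hN : (d : ℝ) ≤ N) :
    ∃ C > 0, ∀ t : ℝ, 0 < t → ∀ ω : ℝ, 0 ≤ ω →
      (∫ θ in (0:ℝ)..(π / 2),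
          (Real.sin θ) ^ (d - 2) * (jbracket ((1/4) * t ^ 2 * θ ^ 2 * ω ^ 2)) ^ (-(N / 2)))
        ≤ C * (1 + t * ω) ^ ((1 : ℝ) - d) := by
  have hm : ((d - 2 : ℕ) : ℝ) + 2 ≤ N := by
    rw [Nat.cast_sub (by omega)]; push_cast; linarith
  refine ⟨4 ^ N * (π / 2) ^ (d - 1), by positivity, fun t ht ω hω => ?_⟩
  have hexp : (1 + t * ω) ^ ((1 : ℝ) - d) = ((1 + t * ω) ^ (d - 1))⁻¹ := by
    rw [← rpow_natCast, ← rpow_neg (by positivity), Nat.cast_sub (by omega)]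
    push_cast
    ring_nf
  calc _ = ∫ θ in (0 : ℝ)..(π / 2),
          sin θ ^ (d - 2) * jbracket ((t * ω * θ) ^ 2 / 4) ^ (-(N / 2)) := by
        congr 1; ext θ; ring_nf
    _ ≤ 4 ^ N * (π / 2) ^ (d - 2 + 1) * ((1 + t * ω) ^ (d - 2 + 1))⁻¹ :=
        integral_sin_pow_mul_jbracket_rpow_neg_le hm (by positivity)
    _ = 4 ^ N * (π / 2) ^ (d - 1) * (1 + t * ω) ^ ((1 : ℝ) - d) := by
        rw [hexp, show d - 2 + 1 = d - 1 by omega]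
end
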